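/- Let a be a directed edge of a !-tensor expression G with ectx_G(a)=[E1,...,En] and nctx_G(a)=[N1,...,Nm], and write B' for fr(B). Then: Drop_{Ei} leaves a with edge context [E1,...,E(i-1),E(i+1),...,En] and unchanged node context; Drop_{Ni} leaves a with unchanged edge context and node context [N1,...,N(i-1),N(i+1),...,Nm]; Exp_{Ei,fr} gives the fresh copy fr(a) edge context [E1',...,E(i-1)',E(i+1),...,En] and unchanged node context; Exp_{Ni,fr} gives fr(a) edge context [E1',...,En'] and node context [N1',...,N(i-1)',N(i+1),...,Nm]; Copy_{Ei,fr} gives fr(a) edge context [E1',...,Ei',E(i+1),...,En]; Copy_{Ni,fr} gives fr(a) edge context [E1',...,En'] and node context [N1',...,Ni',N(i+1),...,Nm]; and any edge remaining after a Kill operation has unchanged contexts. In all cases, edges of G surviving the operation unchanged retain their original contexts. -/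

import Mathlib

/-!
Shared infrastructure for !-tensor expressions (Kissinger & Quick,
"Tensors, !-graphs, and non-commutative quantum structures").
-/

namespace BangTensor

/-- Edge names. -/
abbrev EdgeName : Type := ℕ
/-- !-box names (a set disjoint from edge names; modelled as a separate sort). -/
abbrev BoxName : Type := ℕ

/-- Directed edges: an output `â` or an input `ǎ`. -/
inductive DirEdge : Type
  | out (a : EdgeName)
  | inp (a : EdgeName)
  deriving DecidableEq

namespace DirEdge

def name : DirEdge → EdgeName
  | out a => a
  | inp a => a

def partner : DirEdge → DirEdge
  | out a => inp a
  | inp a => out a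

def rename (f : EdgeName → EdgeName) : DirEdge → DirEdge
  | out a => out (f a)
  | inp a => inp (f a)

end DirEdge

/-- A freshness function: a pair of bijections on edge names and !-box names. -/
structure Freshness : Type where
  em : EdgeName ≃ EdgeName
  bm : BoxName ≃ BoxName

/-- Edgeterms: built from the empty edgeterm, directed edges, clockwise
and anticlockwise edge groups, and concatenation. -/
inductive EdgeTerm : Type
  | eps
  | edge (d : DirEdge)
  | cw (e : EdgeTerm) (A : BoxName)
  | acw (e : EdgeTerm) (A : BoxName)
  | cat (e f : EdgeTerm)
  deriving DecidableEq

namespace EdgeTerm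

/-- Number of occurrences of a directed edge in an edgeterm. -/
def count (d : DirEdge) : EdgeTerm → ℕ
  | eps => 0
  | edge d' => if d' = d then 1 else 0
  | cw e _ => e.count d
  | acw e _ => e.count d
  | cat e f => e.count d + f.count d

/-- Edge context of a directed edge inside an edgeterm: the list of !-boxes
(edge groups) containing it, inside-out. -/
def ectx (d : DirEdge) : EdgeTerm → Option (List BoxName)
  | eps => none
  | edge d' => if d' = d then some [] else none
  | cw e A => (e.ectx d).map (· ++ [A])
  | acw e A => (e.ectx d).map (· ++ [A])
  | cat e f => (e.ectx d).orElse (fun _ => f.ectx d)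

def edgeNames : EdgeTerm → Set EdgeName
  | eps => ∅
  | edge d => {d.name}
  | cw e _ => e.edgeNames
  | acw e _ => e.edgeNames
  | cat e f => e.edgeNames ∪ f.edgeNames

def boxNames : EdgeTerm → Set BoxName
  | eps => ∅
  | edge _ => ∅
  | cw e A => insert A e.boxNames
  | acw e A => insert A e.boxNames
  | cat e f => e.boxNames ∪ f.boxNames

def rename (f : EdgeName → EdgeName) (g : BoxName → BoxName) : EdgeTerm → EdgeTerm
  | eps => eps
  | edge d => edge (d.rename f)
  | cw e A => cw (e.rename f g) (g A)
  | acw e A => acw (e.rename f g) (g A)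
  | cat e f' => cat (e.rename f g) (f'.rename f g)

/-- Rename the output edge `b̂` to `ĉ`. -/
def renameOut (b c : EdgeName) : EdgeTerm → EdgeTerm
  | eps => eps
  | edge (.out a) => edge (.out (if a = b then c else a))
  | edge (.inp a) => edge (.inp a)
  | cw e A => cw (e.renameOut b c) A
  | acw e A => acw (e.renameOut b c) A
  | cat e f => cat (e.renameOut b c) (f.renameOut b c)

/-- Rename the input edge `b̌` to `č`. -/
def renameInp (b c : EdgeName) : EdgeTerm → EdgeTerm
  | eps => eps
  | edge (.out a) => edge (.out a)
  | edge (.inp a) => edge (.inp (if a = b then c else a))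
  | cw e A => cw (e.renameInp b c) A
  | acw e A => acw (e.renameInp b c) A
  | cat e f => cat (e.renameInp b c) (f.renameInp b c)

/-- The operation `Kill_A` on edgeterms. -/
def kill (A : BoxName) : EdgeTerm → EdgeTerm
  | eps => eps
  | edge d => edge d
  | cw e B => if B = A then eps else cw (e.kill A) B
  | acw e B => if B = A then eps else acw (e.kill A) B
  | cat e f => cat (e.kill A) (f.kill A)

/-- The operation `Drop_A` on edgeterms. -/
def drop (A : BoxName) : EdgeTerm → EdgeTerm
  | eps => eps
  | edge d => edge d
  | cw e B => if B = A then e else cw (e.drop A) B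
  | acw e B => if B = A then e else acw (e.drop A) B
  | cat e f => cat (e.drop A) (f.drop A)

/-- The operation `Exp_{A,fr}` on edgeterms. -/
def exp (A : BoxName) (fr : Freshness) : EdgeTerm → EdgeTerm
  | eps => eps
  | edge d => edge d
  | cw e B => if B = A then cat (cw e B) (e.rename fr.em fr.bm) else cw (e.exp A fr) B
  | acw e B => if B = A then cat (e.rename fr.em fr.bm) (acw e B) else acw (e.exp A fr) B
  | cat e f => cat (e.exp A fr) (f.exp A fr)

/-- The operation `Copy_{A,fr}` on edgeterms. -/
def copy (A : BoxName) (fr : Freshness) : EdgeTerm → EdgeTerm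
  | eps => eps
  | edge d => edge d
  | cw e B =>
      if B = A then cat (cw e B) (cw (e.rename fr.em fr.bm) (fr.bm A)) else cw (e.copy A fr) B
  | acw e B =>
      if B = A then cat (acw (e.rename fr.em fr.bm) (fr.bm A)) (acw e B) else acw (e.copy A fr) B
  | cat e f => cat (e.copy A fr) (f.copy A fr)

/-- An edgeterm with no edge groups (a concrete edgeterm). -/
def noGroups : EdgeTerm → Prop
  | eps => True
  | edge _ => True
  | cw _ _ => False
  | acw _ _ => False
  | cat e f => e.noGroups ∧ f.noGroups

/-- Equivalence of edgeterms: associativity and unit laws for concatenation,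
and removal of empty edge groups; closed under congruence. -/
inductive Equiv : EdgeTerm → EdgeTerm → Prop
  | refl (e) : Equiv e e
  | symm {e f} : Equiv e f → Equiv f e
  | trans {e f g} : Equiv e f → Equiv f g → Equiv e g
  | cat_congr {e e' f f'} : Equiv e e' → Equiv f f' → Equiv (cat e f) (cat e' f')
  | cw_congr {e e'} (A) : Equiv e e' → Equiv (cw e A) (cw e' A)
  | acw_congr {e e'} (A) : Equiv e e' → Equiv (acw e A) (acw e' A)
  | assoc (e f g) : Equiv (cat (cat e f) g) (cat e (cat f g))
  | unit_left (e) : Equiv (cat eps e) e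
  | unit_right (e) : Equiv (cat e eps) e
  | cw_eps (A) : Equiv (cw eps A) eps
  | acw_eps (A) : Equiv (acw eps A) eps

end EdgeTerm

/-- !-pretensor expressions over a signature `σ`. -/
inductive Pretensor (σ : Type) : Type
  | unit
  | idt (a b : EdgeName)
  | gen (φ : σ) (e : EdgeTerm)
  | box (G : Pretensor σ) (A : BoxName)
  | prod (G H : Pretensor σ)

namespace Pretensor

variable {σ : Type}

def edgeCount (d : DirEdge) : Pretensor σ → ℕ
  | unit => 0
  | idt a b => (if d = DirEdge.out a then 1 else 0) + (if d = DirEdge.inp b then 1 else 0)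
  | gen _ e => e.count d
  | box G _ => G.edgeCount d
  | prod G H => G.edgeCount d + H.edgeCount d

def boxCount (A : BoxName) : Pretensor σ → ℕ
  | unit => 0
  | idt _ _ => 0
  | gen _ _ => 0
  | box G B => (if B = A then 1 else 0) + G.boxCount A
  | prod G H => G.boxCount A + H.boxCount A

/-- The pair (edge context, node context) of a directed edge, if it occurs. -/
def ctx2 (d : DirEdge) : Pretensor σ → Option (List BoxName × List BoxName)
  | unit => none
  | idt a b => if d = DirEdge.out a ∨ d = DirEdge.inp b then some ([], []) else none
  | gen _ e => (e.ectx d).map (fun l => (l, []))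
  | box G A => (G.ctx2 d).map (fun p => (p.1, p.2 ++ [A]))
  | prod G H => (G.ctx2 d).orElse (fun _ => H.ctx2 d)

/-- The edge context of a directed edge. -/
def ectxOf (G : Pretensor σ) (d : DirEdge) : Option (List BoxName) := (G.ctx2 d).map (·.1)

/-- The node context of a directed edge. -/
def nctxOf (G : Pretensor σ) (d : DirEdge) : Option (List BoxName) := (G.ctx2 d).map (·.2)

/-- The (total) context of a directed edge: edge context followed by node context. -/
def ctxOf (G : Pretensor σ) (d : DirEdge) : Option (List BoxName) :=
  (G.ctx2 d).map (fun p => p.1 ++ p.2)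

/-- The list of !-boxes enclosing the !-box `A`, inside-out, if `A` occurs. -/
def boxCtx (A : BoxName) : Pretensor σ → Option (List BoxName)
  | unit => none
  | idt _ _ => none
  | gen _ _ => none
  | box G B => if B = A then some [] else (G.boxCtx A).map (· ++ [B])
  | prod G H => (G.boxCtx A).orElse (fun _ => H.boxCtx A)

/-- `A ≺_G B`: the !-box `A` is nested immediately inside the !-box `B` in `G`. -/
def Prec (G : Pretensor σ) (A B : BoxName) : Prop := ∃ l, G.boxCtx A = some (B :: l)

/-- `A` is nested (possibly not immediately) inside `B` in `G`. -/
def nestedIn (G : Pretensor σ) (A B : BoxName) : Prop := Relation.TransGen G.Prec A B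

/-- `A` is a top-level !-box of `G` (it occurs and has no parent !-box). -/
def topLevel (G : Pretensor σ) (A : BoxName) : Prop := G.boxCtx A = some []

def edgeNames : Pretensor σ → Set EdgeName
  | unit => ∅
  | idt a b => {a, b}
  | gen _ e => e.edgeNames
  | box G _ => G.edgeNames
  | prod G H => G.edgeNames ∪ H.edgeNames

def boxNames : Pretensor σ → Set BoxName
  | unit => ∅
  | idt _ _ => ∅
  | gen _ e => e.boxNames
  | box G A => insert A G.boxNames
  | prod G H => G.boxNames ∪ H.boxNames

/-- The directed edge `d` occurs in `G`. -/
def occursDir (G : Pretensor σ) (d : DirEdge) : Prop := G.edgeCount d ≠ 0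

/-- The directed edge `d` is free in `G` (it occurs and its partner does not). -/
def freeDir (G : Pretensor σ) (d : DirEdge) : Prop := G.occursDir d ∧ ¬ G.occursDir d.partner

/-- The edge name `a` is free in `G`: exactly one of `â`, `ǎ` occurs in `G`. -/
def freeName (G : Pretensor σ) (a : EdgeName) : Prop :=
  Xor' (G.occursDir (DirEdge.out a)) (G.occursDir (DirEdge.inp a))

/-- A !-tensor expression: a !-pretensor expression satisfying the freshness
conditions F1, F2 and the context conditions C1, C2, C3. -/
def IsTensorExpr (G : Pretensor σ) : Prop :=
  -- F1: each of `â` and `ǎ` occurs at most once per edge name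
  (∀ d : DirEdge, G.edgeCount d ≤ 1) ∧
  -- F2: each !-box name has at most one occurrence of `[...]_A`
  (∀ A : BoxName, G.boxCount A ≤ 1) ∧
  -- C1: edge context and node context are disjoint
  (∀ (d : DirEdge) (ec nc : List BoxName), G.ctx2 d = some (ec, nc) → ec.Disjoint nc) ∧
  -- C2: edge contexts consist of !-boxes of G, consecutively immediately nested
  (∀ (d : DirEdge) (ec nc : List BoxName), G.ctx2 d = some (ec, nc) →
    (∀ B ∈ ec, G.boxCount B ≠ 0) ∧ List.Chain' G.Prec ec) ∧
  -- C3: coherence for bound pairs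
  (∀ (a : EdgeName) (eo no ei ni : List BoxName),
    G.ctx2 (DirEdge.out a) = some (eo, no) → G.ctx2 (DirEdge.inp a) = some (ei, ni) →
    ∃ es bs : List BoxName, es ++ ni = eo ++ bs ∧ es ++ no = ei ++ bs)

/-- Apply renamings of edge names and box names throughout a !-pretensor expression. -/
def rename (f : EdgeName → EdgeName) (g : BoxName → BoxName) : Pretensor σ → Pretensor σ
  | unit => unit
  | idt a b => idt (f a) (f b)
  | gen φ e => gen φ (e.rename f g)
  | box G A => box (G.rename f g) (g A)
  | prod G H => prod (G.rename f g) (H.rename f g)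

/-- Rename the output edge `b̂` to `ĉ`. -/
def renameOut (b c : EdgeName) : Pretensor σ → Pretensor σ
  | unit => unit
  | idt a y => idt (if a = b then c else a) y
  | gen φ e => gen φ (e.renameOut b c)
  | box G A => box (G.renameOut b c) A
  | prod G H => prod (G.renameOut b c) (H.renameOut b c)

/-- Rename the input edge `b̌` to `č`. -/
def renameInp (b c : EdgeName) : Pretensor σ → Pretensor σ
  | unit => unit
  | idt a y => idt a (if y = b then c else y)
  | gen φ e => gen φ (e.renameInp b c)
  | box G A => box (G.renameInp b c) A
  | prod G H => prod (G.renameInp b c) (H.renameInp b c)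

/-- Rename the edge name `a` (in both directions) to `c`. -/
def renameEdgeName (a c : EdgeName) (G : Pretensor σ) : Pretensor σ :=
  G.rename (fun x => if x = a then c else x) id

/-- Rename the !-box name `A` to `B`. -/
def renameBoxName (A B : BoxName) (G : Pretensor σ) : Pretensor σ :=
  G.rename id (fun X => if X = A then B else X)

/-- The !-box operation `Kill_A`. -/
def kill (A : BoxName) : Pretensor σ → Pretensor σ
  | unit => unit
  | idt a b => idt a b
  | gen φ e => gen φ (e.kill A)
  | box G B => if B = A then unit else box (G.kill A) B
  | prod G H => prod (G.kill A) (H.kill A)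

/-- The !-box operation `Drop_A`. -/
def drop (A : BoxName) : Pretensor σ → Pretensor σ
  | unit => unit
  | idt a b => idt a b
  | gen φ e => gen φ (e.drop A)
  | box G B => if B = A then G else box (G.drop A) B
  | prod G H => prod (G.drop A) (H.drop A)

/-- The !-box operation `Exp_{A,fr}`. -/
def exp (A : BoxName) (fr : Freshness) : Pretensor σ → Pretensor σ
  | unit => unit
  | idt a b => idt a b
  | gen φ e => gen φ (e.exp A fr)
  | box G B => if B = A then prod (box G B) (G.rename fr.em fr.bm) else box (G.exp A fr) B
  | prod G H => prod (G.exp A fr) (H.exp A fr)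

/-- The !-box operation `Copy_{A,fr}`. -/
def copy (A : BoxName) (fr : Freshness) : Pretensor σ → Pretensor σ
  | unit => unit
  | idt a b => idt a b
  | gen φ e => gen φ (e.copy A fr)
  | box G B =>
      if B = A then prod (box G B) (box (G.rename fr.em fr.bm) (fr.bm A))
      else box (G.copy A fr) B
  | prod G H => prod (G.copy A fr) (H.copy A fr)

/-- Weakening `Wk_A^K`: add `K` inside the !-box `A`. -/
def wk (A : BoxName) (K : Pretensor σ) : Pretensor σ → Pretensor σ
  | box G B => if B = A then box (prod G K) B else box (wk A K G) B
  | prod G H => prod (wk A K G) (wk A K H)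
  | G => G

/-- A concrete tensor expression: no !-boxes and no edge groups. -/
def IsConcrete : Pretensor σ → Prop
  | unit => True
  | idt _ _ => True
  | gen _ e => e.noGroups
  | box _ _ => False
  | prod G H => G.IsConcrete ∧ H.IsConcrete

/-- Nesting of !-boxes: `nest [(K₁,B₁),…,(Kₙ,Bₙ)] X = [Kₙ ⋯ [K₁ ⬝ X]_{B₁} ⋯]_{Bₙ}`. -/
def nest : List (Pretensor σ × BoxName) → Pretensor σ → Pretensor σ
  | [], X => X
  | p :: rest, X => nest rest (box (prod p.1 X) p.2)

/-- Equivalence of !-tensor expressions: associativity, commutativity and unit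
laws for product, edgeterm equivalences, renaming of bound edge names to fresh
names, and the identity-contraction laws. -/
inductive Equiv : Pretensor σ → Pretensor σ → Prop
  | refl (G) : Equiv G G
  | symm {G H} : Equiv G H → Equiv H G
  | trans {G H K} : Equiv G H → Equiv H K → Equiv G K
  | prod_congr {G G' H H'} : Equiv G G' → Equiv H H' → Equiv (prod G H) (prod G' H')
  | box_congr {G G'} (A) : Equiv G G' → Equiv (box G A) (box G' A)
  | gen_congr (φ) {e e'} : EdgeTerm.Equiv e e' → Equiv (gen φ e) (gen φ e')
  | prod_assoc (G H K) : Equiv (prod (prod G H) K) (prod G (prod H K))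
  | prod_comm (G H) : Equiv (prod G H) (prod H G)
  | prod_unit (G) : Equiv (prod G unit) G
  | bound_rename (G : Pretensor σ) (a c : EdgeName) :
      G.occursDir (DirEdge.out a) → G.occursDir (DirEdge.inp a) → c ∉ G.edgeNames →
      Equiv G (G.renameEdgeName a c)
  | contract_inp (G : Pretensor σ) (L : List (Pretensor σ × BoxName)) (a b : EdgeName) :
      G.occursDir (DirEdge.inp b) → ¬ G.occursDir (DirEdge.out b) →
      Equiv (prod G (nest L (idt b a))) (prod (G.renameInp b a) (nest L unit))
  | contract_out (H : Pretensor σ) (L : List (Pretensor σ × BoxName)) (a b : EdgeName) :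
      H.occursDir (DirEdge.out b) → ¬ H.occursDir (DirEdge.inp b) →
      Equiv (prod H (nest L (idt a b))) (prod (H.renameOut b a) (nest L unit))

/-- Rename the free edge names of `G` along `rn`. -/
def freeNameB (G : Pretensor σ) (a : EdgeName) : Bool :=
  (G.edgeCount (DirEdge.out a) != 0) ^^ (G.edgeCount (DirEdge.inp a) != 0)

end Pretensor

/-- Rename the free edge names of `G` along `rn`. -/
def renameFree {σ : Type} (rn : EdgeName → EdgeName) (G : Pretensor σ) : Pretensor σ :=
  G.rename (fun a => if G.freeNameB a then rn a else a) id

/-- `fr` is a freshness function for `G`: names occurring in `G` are mapped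
to names not occurring in `G`. -/
def Freshness.IsFreshFor {σ : Type} (fr : Freshness) (G : Pretensor σ) : Prop :=
  (∀ a ∈ G.edgeNames, fr.em a ∉ G.edgeNames) ∧ (∀ A ∈ G.boxNames, fr.bm A ∉ G.boxNames)

/-- The four !-box operations. -/
inductive BOp : Type
  | exp (A : BoxName) (fr : Freshness)
  | kill (A : BoxName)
  | copy (A : BoxName) (fr : Freshness)
  | drop (A : BoxName)

/-- Apply a !-box operation. -/
def BOp.app {σ : Type} : BOp → Pretensor σ → Pretensor σ
  | .exp A fr, G => G.exp A fr
  | .kill A, G => G.kill A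
  | .copy A fr, G => G.copy A fr
  | .drop A, G => G.drop A

/-- A !-box operation is applied appropriately: its freshness function (if any)
is a freshness function for the expression it is applied to. -/
def BOp.OK {σ : Type} : BOp → Pretensor σ → Prop
  | .exp _ fr, G => fr.IsFreshFor G
  | .copy _ fr, G => fr.IsFreshFor G
  | _, _ => True

def BOp.isExpKill : BOp → Prop
  | .exp _ _ => True
  | .kill _ => True
  | _ => False

def BOp.notDrop : BOp → Prop
  | .drop _ => False
  | _ => True

/-- Apply a list of !-box operations, left to right. -/
def applyOps {σ : Type} : List BOp → Pretensor σ → Pretensor σ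
  | [], G => G
  | op :: rest, G => applyOps rest (op.app G)

/-- Each operation in the list is applied appropriately. -/
def OpsOK {σ : Type} : List BOp → Pretensor σ → Prop
  | [], _ => True
  | op :: rest, G => op.OK G ∧ OpsOK rest (op.app G)

/-- An instantiation of `G`: a finite composite of (appropriately applied)
`Exp` and `Kill` operations whose result contains no !-boxes. -/
def IsInst {σ : Type} (i : List BOp) (G : Pretensor σ) : Prop :=
  (∀ op ∈ i, op.isExpKill) ∧ OpsOK i G ∧ (applyOps i G).IsConcrete

/-- Compatible boundaries: identical free edges, the same !-boxes with the same
immediate-nesting relation, and equal contexts on free edges. -/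
def Compatible {σ : Type} (G H : Pretensor σ) : Prop :=
  (∀ d, G.freeDir d ↔ H.freeDir d) ∧
  (∀ A, G.boxCount A ≠ 0 ↔ H.boxCount A ≠ 0) ∧
  (∀ A B, G.Prec A B ↔ H.Prec A B) ∧
  (∀ d, G.freeDir d → G.ctxOf d = H.ctxOf d)

/-- The set of concrete instances of the !-tensor equation `G = H`. -/
def ConcInst {σ : Type} (G H : Pretensor σ) : Set (Pretensor σ × Pretensor σ) :=
  {p | ∃ i : List BOp, IsInst i G ∧ p = (applyOps i G, applyOps i H)}

end BangTensor

/-!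
Every !-box operation acts only on the subterm `[H]_B`, so the context of a directed edge changes
only at the occurrence of `B` in it, and the fresh copy `fr(d)` lives in `fr(H)`, where its
contexts are the renamed contexts of `d` inside `B` followed by the surroundings of `[H]_B`.
`Exp` and `Copy` differ only in whether `fr(H)` is wrapped in `fr(B)`, so both are instances of
one operation `expand`. What makes the table exact is that, in a !-tensor expression, the edge
and node contexts of an edge together list pairwise distinct !-boxes: node contexts by F2,
edge contexts because nesting depth strictly decreases along the chain of C2, and the two are
disjoint by C1.
-/

namespace List

theorem append_singleton_eq_append_cons {α : Type*} {m l₁ l₂ : List α} {c b : α}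
    (h : m ++ [c] = l₁ ++ b :: l₂) :
    (l₂ = [] ∧ c = b ∧ m = l₁) ∨ ∃ l₂', l₂ = l₂' ++ [c] ∧ m = l₁ ++ b :: l₂' := by
  rcases eq_nil_or_concat l₂ with rfl | ⟨l₂', x, rfl⟩
  · obtain ⟨rfl, hc⟩ := append_inj' h rfl
    exact .inl ⟨rfl, singleton_inj.mp hc, rfl⟩
  · obtain ⟨rfl, hc⟩ := append_inj'
      (by simpa using h : m ++ [c] = (l₁ ++ b :: l₂') ++ [x]) rfl
    exact .inr ⟨l₂', by simp [singleton_inj.mp hc], rfl⟩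

theorem erase_append_singleton_of_ne {α : Type*} [DecidableEq α] {a b : α} (l : List α)
    (h : a ≠ b) : (l ++ [a]).erase b = l.erase b ++ [a] := by
  by_cases hb : b ∈ l
  · exact erase_append_left _ hb
  · simp [erase_append_right _ hb, erase_of_not_mem hb, h]

theorem notMem_of_nodup_append_cons {α : Type*} {l₁ l₂ : List α} {a : α}
    (h : (l₁ ++ a :: l₂).Nodup) : a ∉ l₁ ++ l₂ :=
  (nodup_middle.mp h).notMem

end List

namespace BangTensor

namespace DirEdge

theorem name_rename (f : EdgeName → EdgeName) (d : DirEdge) : (d.rename f).name = f d.name := by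
  cases d <;> rfl

theorem rename_injective {f : EdgeName → EdgeName} (hf : Function.Injective f) :
    Function.Injective (rename f) := by
  rintro (a | a) (b | b) h <;> simp_all [rename, hf.eq_iff]

end DirEdge

namespace EdgeTerm

theorem ectx_eq_none_iff {d : DirEdge} {e : EdgeTerm} : e.ectx d = none ↔ e.count d = 0 := by
  induction e with
  | edge d' => by_cases h : d' = d <;> simp [ectx, count, h]
  | cat e f ihe ihf => simp [ectx, count, ihe, ihf]
  | _ => simp_all [ectx, count]

theorem ectx_eq_none_of_name_notMem {d : DirEdge} {e : EdgeTerm} (h : d.name ∉ e.edgeNames) :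
    e.ectx d = none := by
  induction e with
  | edge d' =>
    have : d' ≠ d := by rintro rfl; exact h rfl
    simp [ectx, this]
  | _ => simp_all [ectx, edgeNames]

theorem edgeNames_rename (f : EdgeName → EdgeName) (g : BoxName → BoxName) (e : EdgeTerm) :
    (e.rename f g).edgeNames = f '' e.edgeNames := by
  induction e with
  | edge d => simp [rename, edgeNames, DirEdge.name_rename]
  | cat e f' ihe ihf => simp [rename, edgeNames, ihe, ihf, Set.image_union]
  | _ => simp_all [rename, edgeNames]

theorem ectx_rename {f : EdgeName → EdgeName} (hf : Function.Injective f)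
    (g : BoxName → BoxName) (d : DirEdge) (e : EdgeTerm) :
    (e.rename f g).ectx (d.rename f) = (e.ectx d).map (List.map g) := by
  induction e with
  | edge d' => by_cases h : d' = d <;> simp [rename, ectx, (DirEdge.rename_injective hf).eq_iff, h]
  | cat e f' ihe ihf => cases h : e.ectx d <;> simp_all [rename, ectx]
  | _ => simp_all [rename, ectx, Option.map_map, Function.comp_def]

theorem ectx_drop {d : DirEdge} {e : EdgeTerm} (B : BoxName) (h : ∀ l ∈ e.ectx d, l.Nodup) :
    (e.drop B).ectx d = (e.ectx d).map (·.erase B) := by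
  induction e with
  | edge d' => by_cases h : d' = d <;> simp [drop, ectx, h]
  | cw e A ih | acw e A ih =>
    cases he : e.ectx d with
    | none => by_cases hA : A = B <;> simp_all [drop, ectx]
    | some m =>
      have hnd : (m ++ [A]).Nodup := h _ (by simp [ectx, he])
      have ih' := ih (by simpa [he] using hnd.sublist (List.sublist_append_left _ _))
      by_cases hA : A = B
      · subst hA
        have hm : A ∉ m := fun hA => List.disjoint_of_nodup_append hnd hA (List.mem_singleton_self A)
        simp [drop, ectx, he, List.erase_append_right _ hm]
      · simp [drop, ectx, hA, he, ih', List.erase_append_singleton_of_ne _ hA]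
  | cat e f ihe ihf =>
    cases he : e.ectx d <;> simp_all [drop, ectx]
  | eps => rfl

theorem ectx_kill {d : DirEdge} {e : EdgeTerm} (B : BoxName) (h : e.count d ≤ 1) :
    (e.kill B).ectx d = (e.ectx d).filter (fun l => B ∉ l) := by
  induction e with
  | edge d' => by_cases h : d' = d <;> simp [kill, ectx, h, Option.filter_some]
  | cw e A ih | acw e A ih =>
    simp only [count] at h
    cases he : e.ectx d with
    | none => by_cases hA : A = B <;> simp_all [kill, ectx]
    | some m =>
      by_cases hA : A = B
      · simp [kill, ectx, he, hA, Option.filter_some]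
      · by_cases hB : B ∈ m <;> simp_all [kill, ectx, Option.filter_some, Ne.symm hA]
  | cat e f ihe ihf =>
    simp only [count] at h
    cases he : e.ectx d with
    | none => simp [kill, ectx, he, ihe (by omega), ihf (by omega)]
    | some m =>
      have hf : f.ectx d = none := by
        rw [ectx_eq_none_iff]
        have : e.count d ≠ 0 := fun h0 => by simp [ectx_eq_none_iff.mpr h0] at he
        omega
      by_cases hB : B ∈ m <;>
        simp [kill, ectx, he, hf, hB, ihe (by omega), ihf (by omega), Option.filter_some]
  | eps => rfl

def expand (A : BoxName) (fr : Freshness) (L : List BoxName) : EdgeTerm → EdgeTerm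
  | eps => eps
  | edge d => edge d
  | cw e B =>
      if B = A then cat (cw e B) (L.foldl cw (e.rename fr.em fr.bm)) else cw (e.expand A fr L) B
  | acw e B =>
      if B = A then cat (L.foldl acw (e.rename fr.em fr.bm)) (acw e B) else acw (e.expand A fr L) B
  | cat e f => cat (e.expand A fr L) (f.expand A fr L)

theorem exp_eq_expand (A : BoxName) (fr : Freshness) (e : EdgeTerm) :
    e.exp A fr = e.expand A fr [] := by
  induction e <;> simp_all [exp, expand]

theorem copy_eq_expand (A : BoxName) (fr : Freshness) (e : EdgeTerm) :
    e.copy A fr = e.expand A fr [fr.bm A] := by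
  induction e <;> simp_all [copy, expand]

theorem ectx_foldl_cw (d : DirEdge) (e : EdgeTerm) (L : List BoxName) :
    (L.foldl cw e).ectx d = (e.ectx d).map (· ++ L) := by
  induction L generalizing e <;> simp_all [ectx, Option.map_map, Function.comp_def]

theorem ectx_foldl_acw (d : DirEdge) (e : EdgeTerm) (L : List BoxName) :
    (L.foldl acw e).ectx d = (e.ectx d).map (· ++ L) := by
  induction L generalizing e <;> simp_all [ectx, Option.map_map, Function.comp_def]

theorem ectx_expand_of_notMem {fr : Freshness} {d : DirEdge} {e : EdgeTerm}
    (A : BoxName) (L : List BoxName) (hd : d.name ∉ fr.em '' e.edgeNames) :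
    (e.expand A fr L).ectx d = e.ectx d := by
  induction e with
  | cw e B ih | acw e B ih =>
    simp only [edgeNames] at hd
    have hcopy : (e.rename fr.em fr.bm).ectx d = none :=
      ectx_eq_none_of_name_notMem (by rwa [edgeNames_rename])
    by_cases hB : B = A <;>
      simp_all [expand, ectx, ectx_foldl_cw, ectx_foldl_acw]
  | cat e f ihe ihf => simp_all [expand, ectx, edgeNames, Set.image_union]
  | _ => rfl

theorem ectx_expand_rename_eq_none {fr : Freshness} {d : DirEdge} {e : EdgeTerm}
    (A : BoxName) (L : List BoxName) (hfresh : fr.em d.name ∉ e.edgeNames)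
    (h : e.ectx d = none) : (e.expand A fr L).ectx (d.rename fr.em) = none := by
  induction e with
  | cw e B ih | acw e B ih =>
    simp only [edgeNames] at hfresh
    simp only [ectx, Option.map_eq_none_iff] at h
    have hcopy : (e.rename fr.em fr.bm).ectx (d.rename fr.em) = none := by
      simp_all [ectx_rename fr.em.injective]
    have horig : e.ectx (d.rename fr.em) = none :=
      ectx_eq_none_of_name_notMem (by rwa [DirEdge.name_rename])
    by_cases hB : B = A <;>
      simp_all [expand, ectx, ectx_foldl_cw, ectx_foldl_acw]
  | cat e f ihe ihf => simp_all [expand, ectx, edgeNames]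
  | edge d' => exact ectx_eq_none_of_name_notMem (by rwa [DirEdge.name_rename])
  | eps => rfl

theorem ectx_expand_rename {fr : Freshness} {d : DirEdge} {e : EdgeTerm} {A : BoxName}
    {l₁ l₂ : List BoxName} (L : List BoxName) (hfresh : fr.em d.name ∉ e.edgeNames)
    (h : e.ectx d = some (l₁ ++ A :: l₂)) (hA : A ∉ l₂) :
    (e.expand A fr L).ectx (d.rename fr.em) = some (l₁.map fr.bm ++ L ++ l₂) := by
  induction e generalizing l₂ with
  | cw e B ih | acw e B ih =>
    simp only [edgeNames] at hfresh
    simp only [ectx, Option.map_eq_some_iff] at h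
    obtain ⟨m, hm, hml⟩ := h
    have horig : e.ectx (d.rename fr.em) = none :=
      ectx_eq_none_of_name_notMem (by rwa [DirEdge.name_rename])
    rcases List.append_singleton_eq_append_cons hml with ⟨rfl, rfl, rfl⟩ | ⟨l₂', rfl, rfl⟩
    · simp [expand, ectx, horig, ectx_foldl_cw, ectx_foldl_acw, ectx_rename fr.em.injective, hm]
    · have hB : B ≠ A := by rintro rfl; simp at hA
      simp [expand, ectx, hB, ih hfresh hm (by simp_all)]
  | cat e f ihe ihf =>
    simp only [edgeNames, Set.mem_union, not_or] at hfresh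
    cases he : e.ectx d with
    | some m => simp_all [expand, ectx]
    | none => simp_all [expand, ectx, ectx_expand_rename_eq_none]
  | edge d' => by_cases hd : d' = d <;> simp_all [ectx]
  | eps => simp [ectx] at h

end EdgeTerm

namespace Pretensor

variable {σ : Type}

theorem ctx2_eq_none_iff {d : DirEdge} {G : Pretensor σ} :
    G.ctx2 d = none ↔ G.edgeCount d = 0 := by
  induction G with
  | idt a b =>
    by_cases h₁ : d = .out a <;> by_cases h₂ : d = .inp b <;> simp [ctx2, edgeCount, h₁, h₂]
  | gen φ e => simp [ctx2, edgeCount, EdgeTerm.ectx_eq_none_iff]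
  | _ => simp_all [ctx2, edgeCount]

theorem ctx2_eq_none_of_name_notMem {d : DirEdge} {G : Pretensor σ}
    (h : d.name ∉ G.edgeNames) : G.ctx2 d = none := by
  induction G with
  | idt a b =>
    have h₁ : d ≠ .out a := by rintro rfl; simp [edgeNames, DirEdge.name] at h
    have h₂ : d ≠ .inp b := by rintro rfl; simp [edgeNames, DirEdge.name] at h
    simp [ctx2, h₁, h₂]
  | gen φ e => simp [ctx2, EdgeTerm.ectx_eq_none_of_name_notMem h]
  | _ => simp_all [ctx2, edgeNames]

theorem edgeNames_rename (f : EdgeName → EdgeName) (g : BoxName → BoxName) (G : Pretensor σ) :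
    (G.rename f g).edgeNames = f '' G.edgeNames := by
  induction G with
  | idt a b => simp [rename, edgeNames, Set.image_insert_eq]
  | gen φ e => simp [rename, edgeNames, EdgeTerm.edgeNames_rename]
  | prod G H ihG ihH => simp [rename, edgeNames, ihG, ihH, Set.image_union]
  | _ => simp_all [rename, edgeNames]

theorem ctx2_rename {f : EdgeName → EdgeName} (hf : Function.Injective f)
    (g : BoxName → BoxName) (d : DirEdge) (G : Pretensor σ) :
    (G.rename f g).ctx2 (d.rename f) = (G.ctx2 d).map (Prod.map (List.map g) (List.map g)) := by
  induction G with
  | idt a b =>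
    have h₁ : d.rename f = .out (f a) ↔ d = .out a := (DirEdge.rename_injective hf).eq_iff (b := .out a)
    have h₂ : d.rename f = .inp (f b) ↔ d = .inp b := (DirEdge.rename_injective hf).eq_iff (b := .inp b)
    by_cases hd : d = .out a ∨ d = .inp b <;> simp_all [rename, ctx2]
  | gen φ e => simp [rename, ctx2, EdgeTerm.ectx_rename hf, Option.map_map, Function.comp_def]
  | box G A ih => simp [rename, ctx2, ih, Option.map_map, Function.comp_def]
  | prod G H ihG ihH => cases h : G.ctx2 d <;> simp_all [rename, ctx2]
  | unit => rfl

theorem ctx2_drop {d : DirEdge} {G : Pretensor σ} (B : BoxName)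
    (h : ∀ p ∈ G.ctx2 d, (p.1 ++ p.2).Nodup) :
    (G.drop B).ctx2 d = (G.ctx2 d).map (Prod.map (·.erase B) (·.erase B)) := by
  induction G with
  | idt a b => by_cases hd : d = .out a ∨ d = .inp b <;> simp [drop, ctx2, hd]
  | gen φ e =>
    have he : ∀ l ∈ e.ectx d, l.Nodup := by simpa [ctx2] using h
    simp [drop, ctx2, EdgeTerm.ectx_drop B he, Option.map_map, Function.comp_def]
  | box G A ih =>
    cases hG : G.ctx2 d with
    | none => by_cases hA : A = B <;> simp_all [drop, ctx2]
    | some p =>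
      obtain ⟨ec, nc⟩ := p
      have hnd : (ec ++ (nc ++ [A])).Nodup := h (ec, nc ++ [A]) (by simp [ctx2, hG])
      have ih' := ih (by simpa [hG] using hnd.sublist (by simp))
      by_cases hA : A = B
      · subst hA
        have hec : A ∉ ec := fun hA => List.disjoint_of_nodup_append hnd hA (by simp)
        have hnc : A ∉ nc := fun hA => List.disjoint_of_nodup_append
          (List.nodup_append.mp hnd).2.1 hA (List.mem_singleton_self A)
        simp [drop, ctx2, hG, List.erase_of_not_mem hec, List.erase_append_right _ hnc]
      · simp [drop, ctx2, hA, hG, ih', List.erase_append_singleton_of_ne _ hA]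
  | prod G H ihG ihH => cases hG : G.ctx2 d <;> simp_all [drop, ctx2]
  | unit => rfl

theorem ctx2_kill {d : DirEdge} {G : Pretensor σ} (B : BoxName) (h : G.edgeCount d ≤ 1) :
    (G.kill B).ctx2 d = (G.ctx2 d).filter (fun p => B ∉ p.1 ++ p.2) := by
  induction G with
  | idt a b => by_cases hd : d = .out a ∨ d = .inp b <;> simp [kill, ctx2, hd, Option.filter_some]
  | gen φ e =>
    cases he : e.ectx d with
    | none => simp [kill, ctx2, EdgeTerm.ectx_kill B h, he]
    | some m => by_cases hB : B ∈ m <;>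
        simp [kill, ctx2, EdgeTerm.ectx_kill B h, he, hB, Option.filter_some]
  | box G A ih =>
    simp only [edgeCount] at h
    cases hG : G.ctx2 d with
    | none => by_cases hA : A = B <;> simp_all [kill, ctx2]
    | some p =>
      by_cases hA : A = B
      · simp [kill, ctx2, hG, hA, Option.filter_some]
      · by_cases hB : B ∈ p.1 ++ p.2 <;> simp_all [kill, ctx2, Option.filter_some, Ne.symm hA]
  | prod G H ihG ihH =>
    simp only [edgeCount] at h
    cases hG : G.ctx2 d with
    | none => simp [kill, ctx2, hG, ihG (by omega), ihH (by omega)]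
    | some p =>
      have hH : H.ctx2 d = none := by
        rw [ctx2_eq_none_iff]
        have : G.edgeCount d ≠ 0 := fun h0 => by simp [ctx2_eq_none_iff.mpr h0] at hG
        omega
      simp [kill, ctx2, hG, hH, ihG (by omega), ihH (by omega), Option.filter_some]
  | unit => rfl

def expand (A : BoxName) (fr : Freshness) (L : List BoxName) : Pretensor σ → Pretensor σ
  | unit => unit
  | idt a b => idt a b
  | gen φ e => gen φ (e.expand A fr L)
  | box G B =>
      if B = A then prod (box G B) (L.foldl box (G.rename fr.em fr.bm)) else box (G.expand A fr L) B
  | prod G H => prod (G.expand A fr L) (H.expand A fr L)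

theorem exp_eq_expand (A : BoxName) (fr : Freshness) (G : Pretensor σ) :
    G.exp A fr = G.expand A fr [] := by
  induction G <;> simp_all [exp, expand, EdgeTerm.exp_eq_expand]

theorem copy_eq_expand (A : BoxName) (fr : Freshness) (G : Pretensor σ) :
    G.copy A fr = G.expand A fr [fr.bm A] := by
  induction G <;> simp_all [copy, expand, EdgeTerm.copy_eq_expand]

theorem ctx2_foldl_box (d : DirEdge) (G : Pretensor σ) (L : List BoxName) :
    (L.foldl box G).ctx2 d = (G.ctx2 d).map (fun p => (p.1, p.2 ++ L)) := by
  induction L generalizing G <;> simp_all [ctx2, Option.map_map, Function.comp_def]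

theorem ctx2_expand_of_notMem {fr : Freshness} {d : DirEdge} {G : Pretensor σ}
    (A : BoxName) (L : List BoxName) (hd : d.name ∉ fr.em '' G.edgeNames) :
    (G.expand A fr L).ctx2 d = G.ctx2 d := by
  induction G with
  | gen φ e => simp [expand, ctx2, EdgeTerm.ectx_expand_of_notMem A L hd]
  | box G B ih =>
    simp only [edgeNames] at hd
    have hcopy : (G.rename fr.em fr.bm).ctx2 d = none :=
      ctx2_eq_none_of_name_notMem (by rwa [edgeNames_rename])
    by_cases hB : B = A <;> simp_all [expand, ctx2, ctx2_foldl_box]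
  | prod G H ihG ihH => simp_all [expand, ctx2, edgeNames, Set.image_union]
  | _ => rfl

theorem ctx2_expand_rename_eq_none {fr : Freshness} {d : DirEdge} {G : Pretensor σ}
    (A : BoxName) (L : List BoxName) (hfresh : fr.em d.name ∉ G.edgeNames)
    (h : G.ctx2 d = none) : (G.expand A fr L).ctx2 (d.rename fr.em) = none := by
  induction G with
  | gen φ e =>
    simp only [ctx2, Option.map_eq_none_iff] at h
    simp [expand, ctx2, EdgeTerm.ectx_expand_rename_eq_none A L hfresh h]
  | box G B ih =>
    simp only [edgeNames] at hfresh
    simp only [ctx2, Option.map_eq_none_iff] at h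
    have hcopy : (G.rename fr.em fr.bm).ctx2 (d.rename fr.em) = none := by
      simp_all [ctx2_rename fr.em.injective]
    have horig : G.ctx2 (d.rename fr.em) = none :=
      ctx2_eq_none_of_name_notMem (by rwa [DirEdge.name_rename])
    by_cases hB : B = A <;> simp_all [expand, ctx2, ctx2_foldl_box]
  | prod G H ihG ihH => simp_all [expand, ctx2, edgeNames]
  | idt a b => exact ctx2_eq_none_of_name_notMem (by rwa [DirEdge.name_rename])
  | unit => rfl

theorem ctx2_expand_rename_of_ectx {fr : Freshness} {d : DirEdge} {G : Pretensor σ}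
    {A : BoxName} {l₁ l₂ nc : List BoxName} (L : List BoxName)
    (hfresh : fr.em d.name ∉ G.edgeNames) (h : G.ctx2 d = some (l₁ ++ A :: l₂, nc))
    (hA : A ∉ l₂) (hAnc : A ∉ nc) :
    (G.expand A fr L).ctx2 (d.rename fr.em) = some (l₁.map fr.bm ++ L ++ l₂, nc) := by
  induction G generalizing nc with
  | gen φ e =>
    simp only [ctx2, Option.map_eq_some_iff, Prod.mk.injEq] at h
    obtain ⟨l, hl, rfl, rfl⟩ := h
    simp [expand, ctx2, EdgeTerm.ectx_expand_rename L hfresh hl hA]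
  | box G B ih =>
    simp only [ctx2, Option.map_eq_some_iff, Prod.exists, Prod.mk.injEq] at h
    obtain ⟨_, nc', hG, rfl, rfl⟩ := h
    have hB : B ≠ A := by rintro rfl; simp at hAnc
    simp_all [expand, ctx2, edgeNames]
  | prod G H ihG ihH =>
    simp only [edgeNames, Set.mem_union, not_or] at hfresh
    cases hG : G.ctx2 d with
    | some p => simp_all [expand, ctx2]
    | none => simp_all [expand, ctx2, ctx2_expand_rename_eq_none]
  | idt a b => by_cases hd : d = .out a ∨ d = .inp b <;> simp_all [ctx2]
  | unit => simp [ctx2] at h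

theorem ctx2_expand_rename_of_nctx {fr : Freshness} {d : DirEdge} {G : Pretensor σ}
    {A : BoxName} {ec l₁ l₂ : List BoxName} (L : List BoxName)
    (hfresh : fr.em d.name ∉ G.edgeNames) (h : G.ctx2 d = some (ec, l₁ ++ A :: l₂))
    (hA : A ∉ l₂) :
    (G.expand A fr L).ctx2 (d.rename fr.em) = some (ec.map fr.bm, l₁.map fr.bm ++ L ++ l₂) := by
  induction G generalizing l₂ with
  | gen φ e => simp [ctx2] at h
  | box G B ih =>
    simp only [edgeNames] at hfresh
    simp only [ctx2, Option.map_eq_some_iff, Prod.exists, Prod.mk.injEq] at h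
    obtain ⟨_, m, hG, rfl, hml⟩ := h
    have horig : G.ctx2 (d.rename fr.em) = none :=
      ctx2_eq_none_of_name_notMem (by rwa [DirEdge.name_rename])
    rcases List.append_singleton_eq_append_cons hml with ⟨rfl, rfl, rfl⟩ | ⟨l₂', rfl, rfl⟩
    · simp [expand, ctx2, horig, ctx2_foldl_box, ctx2_rename fr.em.injective, hG]
    · have hB : B ≠ A := by rintro rfl; simp at hA
      simp [expand, ctx2, hB, ih hfresh hG (by simp_all)]
  | prod G H ihG ihH =>
    simp only [edgeNames, Set.mem_union, not_or] at hfresh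
    cases hG : G.ctx2 d with
    | some p => simp_all [expand, ctx2]
    | none => simp_all [expand, ctx2, ctx2_expand_rename_eq_none]
  | idt a b => by_cases hd : d = .out a ∨ d = .inp b <;> simp_all [ctx2]
  | unit => simp [ctx2] at h


theorem boxCount_ne_zero_of_boxCtx {G : Pretensor σ} {A : BoxName} {l : List BoxName}
    (h : G.boxCtx A = some l) : G.boxCount A ≠ 0 := by
  induction G generalizing l with
  | box G C ih =>
    by_cases hC : C = A
    · simp [boxCount, hC]
    · simp only [boxCtx, if_neg hC, Option.map_eq_some_iff] at h
      obtain ⟨m, hm, -⟩ := h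
      simp [boxCount, ih hm]
  | prod G H ihG ihH =>
    cases hG : G.boxCtx A with
    | some m => simp [boxCount, ihG hG]
    | none => simp_all [boxCtx, boxCount]
  | _ => simp [boxCtx] at h

theorem boxCount_ne_zero_of_mem_nctx {G : Pretensor σ} {d : DirEdge} {ec nc : List BoxName}
    {B : BoxName} (h : G.ctx2 d = some (ec, nc)) (hB : B ∈ nc) : G.boxCount B ≠ 0 := by
  induction G generalizing ec nc with
  | idt a b => by_cases hd : d = .out a ∨ d = .inp b <;> simp_all [ctx2]
  | gen φ e => simp_all [ctx2]
  | box G A ih =>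
    simp only [ctx2, Option.map_eq_some_iff, Prod.exists, Prod.mk.injEq] at h
    obtain ⟨_, nc', hG, rfl, rfl⟩ := h
    rcases List.mem_append.mp hB with hB | hB
    · simp [boxCount, ih hG hB]
    · simp_all [boxCount]
  | prod G H ihG ihH =>
    cases hG : G.ctx2 d with
    | some p => simp_all [ctx2, boxCount]
    | none => simp_all [ctx2, boxCount]
  | unit => simp [ctx2] at h

theorem boxCount_le_box (G : Pretensor σ) (A X : BoxName) :
    G.boxCount X ≤ (box G A).boxCount X := by
  simp [boxCount]

theorem boxCount_le_prod_left (G H : Pretensor σ) (X : BoxName) :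
    G.boxCount X ≤ (prod G H).boxCount X := by
  simp [boxCount]

theorem boxCount_le_prod_right (G H : Pretensor σ) (X : BoxName) :
    H.boxCount X ≤ (prod G H).boxCount X := by
  simp [boxCount]

theorem nodup_nctx {G : Pretensor σ} (hF2 : ∀ X, G.boxCount X ≤ 1) {d : DirEdge}
    {ec nc : List BoxName} (h : G.ctx2 d = some (ec, nc)) : nc.Nodup := by
  induction G generalizing ec nc with
  | idt a b => by_cases hd : d = .out a ∨ d = .inp b <;> simp_all [ctx2]
  | gen φ e => simp_all [ctx2]
  | box G A ih =>
    simp only [ctx2, Option.map_eq_some_iff, Prod.exists, Prod.mk.injEq] at h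
    obtain ⟨_, nc', hG, rfl, rfl⟩ := h
    have hF2G X := (boxCount_le_box G A X).trans (hF2 X)
    have hA : A ∉ nc' := fun hA => by
      have := hF2 A
      simp [boxCount] at this
      exact boxCount_ne_zero_of_mem_nctx hG hA this
    exact (ih hF2G hG).append (List.nodup_singleton A) (List.disjoint_singleton.mpr hA)
  | prod G H ihG ihH =>
    have hF2G X := (boxCount_le_prod_left G H X).trans (hF2 X)
    have hF2H X := (boxCount_le_prod_right G H X).trans (hF2 X)
    cases hG : G.ctx2 d with
    | some p => exact ihG hF2G (ec := ec) (by simp_all [ctx2])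
    | none => exact ihH hF2H (ec := ec) (by simp_all [ctx2])
  | unit => simp [ctx2] at h

theorem boxCtx_of_boxCtx_eq_cons {G : Pretensor σ} (hF2 : ∀ X, G.boxCount X ≤ 1)
    {A B : BoxName} {l : List BoxName} (h : G.boxCtx A = some (B :: l)) :
    G.boxCtx B = some l := by
  induction G generalizing l with
  | box G C ih =>
    by_cases hCA : C = A
    · simp [boxCtx, hCA] at h
    simp only [boxCtx, if_neg hCA, Option.map_eq_some_iff] at h
    obtain ⟨m, hm, hml⟩ := h
    cases m with
    | nil =>
      obtain ⟨rfl, rfl⟩ : C = B ∧ [] = l := by simpa using hml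
      simp [boxCtx]
    | cons B' m =>
      obtain ⟨rfl, rfl⟩ : B = B' ∧ l = m ++ [C] := by simpa [eq_comm] using hml
      have hGB := ih (fun X => (boxCount_le_box G C X).trans (hF2 X)) hm
      have hCB : C ≠ B := by
        rintro rfl
        have := hF2 C
        simp [boxCount] at this
        exact boxCount_ne_zero_of_boxCtx hGB this
      simp [boxCtx, hCB, hGB]
  | prod G H ihG ihH =>
    have hF2G X := (boxCount_le_prod_left G H X).trans (hF2 X)
    have hF2H X := (boxCount_le_prod_right G H X).trans (hF2 X)
    cases hGA : G.boxCtx A with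
    | some m =>
      simp only [boxCtx, hGA, Option.orElse_some, Option.some.injEq] at h
      subst h
      simp [boxCtx, ihG hF2G hGA]
    | none =>
      simp only [boxCtx, hGA, Option.orElse_none] at h
      have hHB := ihH hF2H h
      cases hGB : G.boxCtx B with
      | none => simp [boxCtx, hGB, hHB]
      | some m =>
        have := hF2 B
        simp only [boxCount] at this
        have := boxCount_ne_zero_of_boxCtx hGB
        have := boxCount_ne_zero_of_boxCtx hHB
        omega
  | _ => simp [boxCtx] at h

def boxDepth (G : Pretensor σ) (X : BoxName) : ℕ := ((G.boxCtx X).map List.length).getD 0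

theorem boxDepth_lt_of_prec {G : Pretensor σ} (hF2 : ∀ X, G.boxCount X ≤ 1) {A B : BoxName}
    (h : G.Prec A B) : G.boxDepth B < G.boxDepth A := by
  obtain ⟨l, hl⟩ := h
  simp [boxDepth, hl, boxCtx_of_boxCtx_eq_cons hF2 hl]

theorem nodup_of_isChain_prec {G : Pretensor σ} (hF2 : ∀ X, G.boxCount X ≤ 1)
    {l : List BoxName} (h : l.IsChain G.Prec) : l.Nodup :=
  have hdepth : (l.map G.boxDepth).IsChain (· > ·) :=
    List.isChain_map_of_isChain G.boxDepth (S := (· > ·))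
      (fun _ _ hab => boxDepth_lt_of_prec hF2 hab) h
  (List.isChain_iff_pairwise.mp hdepth).nodup.of_map _

theorem IsTensorExpr.nodup_ctx {G : Pretensor σ} (hG : G.IsTensorExpr) {d : DirEdge}
    {ec nc : List BoxName} (h : G.ctx2 d = some (ec, nc)) : (ec ++ nc).Nodup :=
  (nodup_of_isChain_prec hG.2.1 (hG.2.2.2.1 d ec nc h).2).append (nodup_nctx hG.2.1 h)
    (hG.2.2.1 d ec nc h)

end Pretensor

theorem Freshness.IsFreshFor.notMem_image {σ : Type} {fr : Freshness} {G : Pretensor σ}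
    (hfr : fr.IsFreshFor G) {a : EdgeName} (ha : a ∈ G.edgeNames) :
    a ∉ fr.em '' G.edgeNames := by
  rintro ⟨b, hb, rfl⟩
  exact hfr.1 b hb ha

/-- The table of contexts affected by !-box operations: given
a directed edge `d` of `G` with edge context `ec` and node context `nc`,
`Drop`, `Exp` and `Copy` on a !-box in the edge or node context of `d` affect
the context of `d` (resp. of its fresh copy `fr(d)`) as listed; edges remaining
after a `Kill` have unchanged contexts, and edges of `G` surviving the other
operations unchanged retain their original contexts. -/
theorem context_table {σ : Type} (G : Pretensor σ) (hG : Pretensor.IsTensorExpr G)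
    (d : DirEdge) (ec nc : List BoxName) (h : G.ctx2 d = some (ec, nc)) :
    -- Drop at a box in the edge context
    (∀ (e1 : List BoxName) (B : BoxName) (e2 : List BoxName), ec = e1 ++ B :: e2 →
      (G.drop B).ctx2 d = some (e1 ++ e2, nc)) ∧
    -- Drop at a box in the node context
    (∀ (n1 : List BoxName) (B : BoxName) (n2 : List BoxName), nc = n1 ++ B :: n2 →
      (G.drop B).ctx2 d = some (ec, n1 ++ n2)) ∧
    -- Exp at a box in the edge context; `fr(d)` is the fresh copy of `d`
    (∀ (e1 : List BoxName) (B : BoxName) (e2 : List BoxName) (fr : Freshness),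
      ec = e1 ++ B :: e2 → fr.IsFreshFor G →
      (G.exp B fr).ctx2 (d.rename fr.em) = some (e1.map fr.bm ++ e2, nc)) ∧
    -- Exp at a box in the node context
    (∀ (n1 : List BoxName) (B : BoxName) (n2 : List BoxName) (fr : Freshness),
      nc = n1 ++ B :: n2 → fr.IsFreshFor G →
      (G.exp B fr).ctx2 (d.rename fr.em) = some (ec.map fr.bm, n1.map fr.bm ++ n2)) ∧
    -- Copy at a box in the edge context
    (∀ (e1 : List BoxName) (B : BoxName) (e2 : List BoxName) (fr : Freshness),
      ec = e1 ++ B :: e2 → fr.IsFreshFor G →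
      (G.copy B fr).ctx2 (d.rename fr.em) = some (e1.map fr.bm ++ fr.bm B :: e2, nc)) ∧
    -- Copy at a box in the node context
    (∀ (n1 : List BoxName) (B : BoxName) (n2 : List BoxName) (fr : Freshness),
      nc = n1 ++ B :: n2 → fr.IsFreshFor G →
      (G.copy B fr).ctx2 (d.rename fr.em) = some (ec.map fr.bm, n1.map fr.bm ++ fr.bm B :: n2)) ∧
    -- Edges remaining after a Kill have unchanged contexts
    (∀ (B : BoxName) (c : List BoxName × List BoxName),
      (G.kill B).ctx2 d = some c → (G.kill B).ctx2 d = G.ctx2 d) ∧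
    -- Surviving original edges retain their contexts
    (∀ B : BoxName, B ∉ ec → B ∉ nc → (G.drop B).ctx2 d = some (ec, nc)) ∧
    (∀ (B : BoxName) (fr : Freshness), fr.IsFreshFor G →
      (G.exp B fr).ctx2 d = some (ec, nc)) ∧
    (∀ (B : BoxName) (fr : Freshness), fr.IsFreshFor G →
      (G.copy B fr).ctx2 d = some (ec, nc)) := by
  have hnd := hG.nodup_ctx h
  have hnd' : ∀ p ∈ G.ctx2 d, (p.1 ++ p.2).Nodup := by simpa [h] using hnd
  have hdn : d.name ∈ G.edgeNames := by
    by_contra hn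
    simp [Pretensor.ctx2_eq_none_of_name_notMem hn] at h
  have hec {e1 B e2} (hs : ec = e1 ++ B :: e2) : B ∉ e1 ∧ B ∉ e2 ∧ B ∉ nc := by
    subst hs
    simpa using List.notMem_of_nodup_append_cons (l₁ := e1) (l₂ := e2 ++ nc) (by simpa using hnd)
  have hnc {n1 B n2} (hs : nc = n1 ++ B :: n2) : B ∉ ec ∧ B ∉ n1 ∧ B ∉ n2 := by
    subst hs
    simpa using List.notMem_of_nodup_append_cons (l₁ := ec ++ n1) (l₂ := n2) (by simpa using hnd)
  refine ⟨?_, ?_, ?_, ?_, ?_, ?_, ?_, ?_, ?_, ?_⟩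
  · intro e1 B e2 hs
    obtain ⟨h1, -, hn⟩ := hec hs
    simp [Pretensor.ctx2_drop B hnd', h, hs, List.erase_append_right _ h1, List.erase_of_not_mem hn]
  · intro n1 B n2 hs
    obtain ⟨he, h1, -⟩ := hnc hs
    simp [Pretensor.ctx2_drop B hnd', h, hs, List.erase_append_right _ h1, List.erase_of_not_mem he]
  · rintro e1 B e2 fr rfl hfr
    obtain ⟨-, h2, hn⟩ := hec rfl
    simpa [Pretensor.exp_eq_expand] using
      Pretensor.ctx2_expand_rename_of_ectx [] (hfr.1 _ hdn) h h2 hn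
  · rintro n1 B n2 fr rfl hfr
    simpa [Pretensor.exp_eq_expand] using
      Pretensor.ctx2_expand_rename_of_nctx [] (hfr.1 _ hdn) h (hnc rfl).2.2
  · rintro e1 B e2 fr rfl hfr
    obtain ⟨-, h2, hn⟩ := hec rfl
    simpa [Pretensor.copy_eq_expand] using
      Pretensor.ctx2_expand_rename_of_ectx [fr.bm B] (hfr.1 _ hdn) h h2 hn
  · rintro n1 B n2 fr rfl hfr
    simpa [Pretensor.copy_eq_expand] using
      Pretensor.ctx2_expand_rename_of_nctx [fr.bm B] (hfr.1 _ hdn) h (hnc rfl).2.2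
  · intro B c hc
    rw [Pretensor.ctx2_kill B (hG.1 d)] at hc ⊢
    rw [hc, (Option.filter_eq_some_iff.mp hc).1]
  · intro B hBe hBn
    simp [Pretensor.ctx2_drop B hnd', h, List.erase_of_not_mem hBe, List.erase_of_not_mem hBn]
  · intro B fr hfr
    rw [Pretensor.exp_eq_expand, Pretensor.ctx2_expand_of_notMem B [] (hfr.notMem_image hdn), h]
  · intro B fr hfr
    rw [Pretensor.copy_eq_expand, Pretensor.ctx2_expand_of_notMem B _ (hfr.notMem_image hdn), h]

end BangTensor
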